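/- arXiv:2407.02930 — 4 statements merged into one kernel-verified Lean document; each statement's English description precedes it below -/
import Mathlib

section
/- In the oblivious model, for every m, k ∈ {1,2} and every t ∈ ℕ, E[h_{mk}(t)] ≤ ∑_{j=0}^{t} (1 − b_k r_k)^j. -/
/-- Index type for the family of primitive random variables:
`inl (m, k, t)` indexes the request variable of user `m`, CP `k`, time `t`;
`inr (n, k, t)` indexes the command indicator of eRRH `n`, CP `k`, time `t`. -/
abbrev FranIdx : Type := (Fin 2 × Fin 2 × ℕ) ⊕ (Fin 2 × Fin 2 × ℕ)

/-- Codomain of each primitive random variable. -/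
def FranType : FranIdx → Type
  | .inl _ => Fin 3
  | .inr _ => Bool

instance FranType.instMeasurableSpace : ∀ i, MeasurableSpace (FranType i)
  | .inl _ => inferInstanceAs (MeasurableSpace (Fin 3))
  | .inr _ => inferInstanceAs (MeasurableSpace Bool)

/-- Oblivious 2-user/2-eRRH/2-CP F-RAN model. -/
structure ObliviousFRAN where
  /-- sample space -/
  Ω : Type
  [mΩ : MeasurableSpace Ω]
  μ : MeasureTheory.Measure Ω
  isProb : MeasureTheory.IsProbabilityMeasure μ
  /-- request rates: `bsplit k n = b_k^{(n+1)}` -/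
  bsplit : Fin 2 → Fin 2 → ℝ
  bsplit_nonneg : ∀ k n, 0 ≤ bsplit k n
  bsum_le_one : ∀ k, bsplit k 0 + bsplit k 1 ≤ 1
  /-- command rates -/
  r : Fin 2 → ℝ
  r_nonneg : ∀ k, 0 ≤ r k
  r_le_one : ∀ k, r k ≤ 1
  /-- request variables: value `0` = no request, value `n.succ` = request sent to eRRH `n` -/
  R : Fin 2 → Fin 2 → ℕ → Ω → Fin 3
  /-- command indicators -/
  γ : Fin 2 → Fin 2 → ℕ → Ω → Bool
  R_meas : ∀ m k t, Measurable (R m k t)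
  γ_meas : ∀ n k t, Measurable (γ n k t)
  R_law : ∀ m k t (n : Fin 2), μ {ω | R m k t ω = n.succ} = ENNReal.ofReal (bsplit k n)
  R_law0 : ∀ m k t, μ {ω | R m k t ω = 0} = ENNReal.ofReal (1 - (bsplit k 0 + bsplit k 1))
  γ_law : ∀ n k t, μ {ω | γ n k t ω = true} = ENNReal.ofReal (r k)
  /-- all the primitive random variables are mutually independent -/
  indep : ProbabilityTheory.iIndepFun (m := fun i => FranType.instMeasurableSpace i)
      (fun i => Sum.rec (motive := fun j => Ω → FranType j)
        (fun p => R p.1 p.2.1 p.2.2) (fun p => γ p.1 p.2.1 p.2.2) i) μ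

attribute [instance] ObliviousFRAN.mΩ

open MeasureTheory ProbabilityTheory Filter

namespace ObliviousFRAN

variable (M : ObliviousFRAN)

/-- AoI of CP `k` at eRRH `n`. -/
def g (n k : Fin 2) : ℕ → M.Ω → ℕ
  | 0 => fun _ => 1
  | t + 1 => fun ω =>
      if M.γ n k t ω = true ∧ ∃ m : Fin 2, M.R m k t ω = n.succ then 1
      else g n k t ω + 1

/-- AoI of CP `k` at user `m`. -/
def h (m k : Fin 2) : ℕ → M.Ω → ℕ
  | 0 => fun _ => 1
  | t + 1 => fun ω =>
      if M.R m k t ω = 0 then h m k t ω + 1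
      else if M.R m k t ω = 1 then
        (if M.γ 0 k t ω = true then 1 else min (h m k t ω) (M.g 0 k t ω) + 1)
      else
        (if M.γ 1 k t ω = true then 1 else min (h m k t ω) (M.g 1 k t ω) + 1)

/-- Expected AoI of CP `k` at eRRH `n` at time `t`. -/
noncomputable def Eg (n k : Fin 2) (t : ℕ) : ℝ := ∫ ω, (M.g n k t ω : ℝ) ∂M.μ

/-- Expected AoI of CP `k` at user `m` at time `t`. -/
noncomputable def Eh (m k : Fin 2) (t : ℕ) : ℝ := ∫ ω, (M.h m k t ω : ℝ) ∂M.μ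

/-- Total request rate of a user for CP `k`: `b_k = b_k^{(1)} + b_k^{(2)}`. -/
def bk (k : Fin 2) : ℝ := M.bsplit k 0 + M.bsplit k 1

/-- `ζ_{nk} = 1 - (1 - b_k^{(n)})^2`. -/
def ζ (n k : Fin 2) : ℝ := 1 - (1 - M.bsplit k n) ^ 2

end ObliviousFRAN

/-!
Let `S` be the event that at time `t` user `m` asks for CP `k` at an eRRH `n` which receives
the command for CP `k` at time `t`. On `S` the age `h_{mk}` drops to `1`; in every case it
grows by at most `1`. The event `S` is determined by the variables drawn at time `t`, whereas
`h_{mk}(t)` is determined by those drawn before `t`, so the two are independent, and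
`P(S) = b_k r_k`. Hence `E[h(t+1)] ≤ (1 - b_k r_k) E[h(t)] + 1`, and unrolling this recursion
from `h(0) = 1` gives the geometric sum.
-/

open Function

lemma le_geom_sum_of_le_mul_add_one {R : Type*} [Semiring R] [PartialOrder R]
    [IsOrderedRing R] {x : ℕ → R} {q : R} (hq : 0 ≤ q)
    (h0 : x 0 ≤ 1) (hstep : ∀ t, x (t + 1) ≤ q * x t + 1) :
    ∀ t, x t ≤ ∑ j ∈ Finset.range (t + 1), q ^ j
  | 0 => by simpa using h0
  | t + 1 => by
    rw [geom_sum_succ]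
    exact (hstep t).trans (by gcongr; exact le_geom_sum_of_le_mul_add_one hq h0 hstep t)

lemma ProbabilityTheory.integral_le_one_sub_measureReal_mul_integral_add_one
    {Ω : Type*} {m m' mΩ : MeasurableSpace Ω} {μ : Measure Ω} [IsProbabilityMeasure μ]
    (hm : m ≤ mΩ) (hind : Indep m m' μ)
    {S : Set Ω} (hS : MeasurableSet[m] S) {X Y : Ω → ℝ} (hX : Integrable X μ)
    (hY : Integrable Y μ) (hYm : Measurable[m'] Y)
    (hXS : ∀ ω ∈ S, X ω ≤ 1) (hXSc : ∀ ω ∈ Sᶜ, X ω ≤ Y ω + 1) :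
    ∫ ω, X ω ∂μ ≤ (1 - μ.real S) * ∫ ω, Y ω ∂μ + 1 := by
  have hS' : MeasurableSet S := hm S hS
  have hYc : Integrable (fun ω => Y ω + 1) μ := hY.add (integrable_const 1)
  have hcompl : ∫ ω in Sᶜ, Y ω + 1 ∂μ = μ.real Sᶜ * ∫ ω, Y ω + 1 ∂μ :=
    (indep_of_indep_of_le_right hind hYm.comap_le).setIntegral_eq_mul hm hY.aemeasurable
      hS.compl (measurable_id.add_const 1).aestronglyMeasurable
  calc ∫ ω, X ω ∂μ = ∫ ω in S, X ω ∂μ + ∫ ω in Sᶜ, X ω ∂μ :=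
        (integral_add_compl hS' hX).symm
    _ ≤ ∫ ω in S, 1 ∂μ + ∫ ω in Sᶜ, Y ω + 1 ∂μ :=
      add_le_add (setIntegral_mono_on hX.integrableOn (integrable_const 1).integrableOn hS' hXS)
        (setIntegral_mono_on hX.integrableOn hYc.integrableOn hS'.compl hXSc)
    _ = (1 - μ.real S) * ∫ ω, Y ω ∂μ + 1 := by
      rw [hcompl, setIntegral_const, integral_add hY (integrable_const 1), integral_const,
        probReal_compl_eq_one_sub hS']
      simp only [probReal_univ, smul_eq_mul, mul_one]
      ring

namespace ObliviousFRAN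

variable (M : ObliviousFRAN)

instance : IsProbabilityMeasure M.μ := M.isProb

def idxTime : FranIdx → ℕ := Sum.elim (·.2.2) (·.2.2)

def fam : ∀ i : FranIdx, M.Ω → FranType i :=
  fun i => Sum.rec (motive := fun j => M.Ω → FranType j)
    (fun p => M.R p.1 p.2.1 p.2.2) (fun p => M.γ p.1 p.2.1 p.2.2) i

lemma measurable_fam : ∀ i, Measurable (M.fam i)
  | .inl p => M.R_meas p.1 p.2.1 p.2.2
  | .inr p => M.γ_meas p.1 p.2.1 p.2.2

abbrev sigmaOf (S : Set FranIdx) : MeasurableSpace M.Ω :=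
  ⨆ i ∈ S, (FranType.instMeasurableSpace i).comap (M.fam i)

lemma sigmaOf_le (S : Set FranIdx) : M.sigmaOf S ≤ M.mΩ :=
  iSup₂_le fun i _ => (M.measurable_fam i).comap_le

lemma sigmaOf_mono {S T : Set FranIdx} (hST : S ⊆ T) : M.sigmaOf S ≤ M.sigmaOf T :=
  biSup_mono hST

lemma indep_sigmaOf {S T : Set FranIdx} (hST : Disjoint S T) :
    Indep (M.sigmaOf S) (M.sigmaOf T) M.μ :=
  indep_iSup_of_disjoint (fun i => (M.measurable_fam i).comap_le) M.indep hST

lemma measurable_fam_sigmaOf {S : Set FranIdx} {i : FranIdx} (hi : i ∈ S) :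
    Measurable[M.sigmaOf S] (M.fam i) :=
  Measurable.of_comap_le <|
    le_iSup₂ (f := fun i (_ : i ∈ S) => (FranType.instMeasurableSpace i).comap (M.fam i)) i hi

lemma measurable_R_sigmaOf {S : Set FranIdx} {m k : Fin 2} {t : ℕ}
    (h : Sum.inl (m, k, t) ∈ S) :
    Measurable[M.sigmaOf S] (M.R m k t) :=
  M.measurable_fam_sigmaOf h

lemma measurable_γ_sigmaOf {S : Set FranIdx} {n k : Fin 2} {t : ℕ}
    (h : Sum.inr (n, k, t) ∈ S) :
    Measurable[M.sigmaOf S] (M.γ n k t) :=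
  M.measurable_fam_sigmaOf h

abbrev past (t : ℕ) : MeasurableSpace M.Ω := M.sigmaOf (idxTime ⁻¹' Set.Iio t)

lemma past_mono {s t : ℕ} (hst : s ≤ t) : M.past s ≤ M.past t :=
  M.sigmaOf_mono fun _ hi => lt_of_lt_of_le hi hst

lemma measurable_g_past (n k : Fin 2) : ∀ t, Measurable[M.past t] (M.g n k t)
  | 0 => measurable_const
  | t + 1 => by
    have hR : Measurable[M.past (t + 1)] (fun ω m => M.R m k t ω) := by
      -- `measurable_pi_iff` takes the σ-algebra on the domain as an instance
      let := M.past (t + 1)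
      exact measurable_pi_iff.mpr fun m => M.measurable_R_sigmaOf (Nat.lt_succ_self t)
    have hγ : Measurable[M.past (t + 1)] (M.γ n k t) :=
      M.measurable_γ_sigmaOf (Nat.lt_succ_self t)
    have hg := (measurable_g_past n k t).mono (M.past_mono t.le_succ) le_rfl
    exact (measurable_of_countable (fun p : (Fin 2 → Fin 3) × Bool × ℕ =>
      if p.2.1 = true ∧ ∃ m : Fin 2, p.1 m = n.succ then 1 else p.2.2 + 1)).comp
      (hR.prodMk (hγ.prodMk hg))

lemma measurable_h_past (m k : Fin 2) : ∀ t, Measurable[M.past t] (M.h m k t)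
  | 0 => measurable_const
  | t + 1 => by
    have hR : Measurable[M.past (t + 1)] (M.R m k t) :=
      M.measurable_R_sigmaOf (Nat.lt_succ_self t)
    have hγ : ∀ n, Measurable[M.past (t + 1)] (M.γ n k t) := fun n =>
      M.measurable_γ_sigmaOf (Nat.lt_succ_self t)
    have hh := (measurable_h_past m k t).mono (M.past_mono t.le_succ) le_rfl
    have hg : ∀ n, Measurable[M.past (t + 1)] (M.g n k t) := fun n =>
      (M.measurable_g_past n k t).mono (M.past_mono t.le_succ) le_rfl
    exact (measurable_of_countable (fun p : Fin 3 × Bool × Bool × ℕ × ℕ × ℕ =>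
      if p.1 = 0 then p.2.2.2.1 + 1
      else if p.1 = 1 then (if p.2.1 = true then 1 else min p.2.2.2.1 p.2.2.2.2.1 + 1)
      else (if p.2.2.1 = true then 1 else min p.2.2.2.1 p.2.2.2.2.2 + 1))).comp
      (hR.prodMk ((hγ 0).prodMk ((hγ 1).prodMk (hh.prodMk ((hg 0).prodMk (hg 1))))))

lemma h_succ_le (m k : Fin 2) (t : ℕ) (ω : M.Ω) : M.h m k (t + 1) ω ≤ M.h m k t ω + 1 := by
  simp only [h]
  split_ifs <;> omega

lemma h_le (m k : Fin 2) (ω : M.Ω) : ∀ t, M.h m k t ω ≤ t + 1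
  | 0 => le_rfl
  | t + 1 => (M.h_succ_le m k t ω).trans (Nat.succ_le_succ (h_le m k ω t))

lemma integrable_h (m k : Fin 2) (t : ℕ) : Integrable (fun ω => (M.h m k t ω : ℝ)) M.μ := by
  refine .of_bound ((measurable_from_nat.comp ((M.measurable_h_past m k t).mono
    (M.sigmaOf_le _) le_rfl)).aestronglyMeasurable) (t + 1) (.of_forall fun ω => ?_)
  rw [Real.norm_natCast]
  exact_mod_cast M.h_le m k ω t

lemma Eh_zero (m k : Fin 2) : M.Eh m k 0 = 1 := by
  simp [Eh, h]

def successEvent (m k : Fin 2) (t : ℕ) : Set M.Ω :=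
  {ω | ∃ n : Fin 2, M.R m k t ω = n.succ ∧ M.γ n k t ω = true}

lemma successEvent_eq (m k : Fin 2) (t : ℕ) :
    M.successEvent m k t =
      ⋃ n : Fin 2, M.R m k t ⁻¹' {n.succ} ∩ M.γ n k t ⁻¹' {true} := by
  ext ω
  simp [successEvent]

lemma h_succ_eq_one_of_mem_successEvent {m k : Fin 2} {t : ℕ} {ω : M.Ω}
    (hω : ω ∈ M.successEvent m k t) : M.h m k (t + 1) ω = 1 := by
  obtain ⟨n, hR, hγ⟩ := hω
  fin_cases n <;> simp_all [h]

lemma measurableSet_successEvent (m k : Fin 2) (t : ℕ) :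
    MeasurableSet[M.sigmaOf (idxTime ⁻¹' {t})] (M.successEvent m k t) := by
  have hR : Measurable[M.sigmaOf (idxTime ⁻¹' {t})] (M.R m k t) := M.measurable_R_sigmaOf rfl
  have hγ : ∀ n, Measurable[M.sigmaOf (idxTime ⁻¹' {t})] (M.γ n k t) := fun n =>
    M.measurable_γ_sigmaOf rfl
  rw [M.successEvent_eq]
  exact .iUnion fun n => (hR (measurableSet_singleton _)).inter (hγ n (measurableSet_singleton _))

lemma measureReal_R_succ_inter_γ (m k n : Fin 2) (t : ℕ) :
    M.μ.real (M.R m k t ⁻¹' {n.succ} ∩ M.γ n k t ⁻¹' {true}) = M.bsplit k n * M.r k := by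
  have hind : IndepFun (M.R m k t) (M.γ n k t) M.μ :=
    M.indep.indepFun (i := Sum.inl (m, k, t)) (j := Sum.inr (n, k, t)) Sum.inl_ne_inr
  rw [measureReal_def, hind.measure_inter_preimage_eq_mul _ _ (measurableSet_singleton _)
    (measurableSet_singleton _)]
  simp only [Set.preimage, Set.mem_singleton_iff]
  rw [M.R_law, M.γ_law, ← ENNReal.ofReal_mul (M.bsplit_nonneg k n),
    ENNReal.toReal_ofReal (mul_nonneg (M.bsplit_nonneg k n) (M.r_nonneg k))]

lemma measureReal_successEvent (m k : Fin 2) (t : ℕ) :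
    M.μ.real (M.successEvent m k t) = M.bk k * M.r k := by
  have hdisj : Pairwise
      (Disjoint on fun n : Fin 2 => M.R m k t ⁻¹' {n.succ} ∩ M.γ n k t ⁻¹' {true}) :=
    fun n n' hne => Set.disjoint_left.2 fun ω h h' =>
      hne (Fin.succ_injective _ (h.1.symm.trans h'.1))
  rw [M.successEvent_eq, measureReal_iUnion_fintype hdisj fun n =>
    (M.R_meas m k t (measurableSet_singleton _)).inter
      (M.γ_meas n k t (measurableSet_singleton _))]
  simp only [measureReal_R_succ_inter_γ, Fin.sum_univ_two, bk, add_mul]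

lemma Eh_succ_le (m k : Fin 2) (t : ℕ) :
    M.Eh m k (t + 1) ≤ (1 - M.bk k * M.r k) * M.Eh m k t + 1 := by
  have hdisj : Disjoint (idxTime ⁻¹' {t}) (idxTime ⁻¹' Set.Iio t) :=
    (Set.disjoint_singleton_left.2 (by simp)).preimage idxTime
  have hstep := integral_le_one_sub_measureReal_mul_integral_add_one (M.sigmaOf_le _)
    (M.indep_sigmaOf hdisj) (M.measurableSet_successEvent m k t) (M.integrable_h m k (t + 1))
    (M.integrable_h m k t) (measurable_from_nat.comp (M.measurable_h_past m k t))
    (fun ω hω => by exact_mod_cast (M.h_succ_eq_one_of_mem_successEvent hω).le)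
    (fun ω _ => by exact_mod_cast M.h_succ_le m k t ω)
  rwa [M.measureReal_successEvent] at hstep

end ObliviousFRAN

/-- `E[h_{mk}(t)] ≤ ∑_{j=0}^t (1 - b_k r_k)^j`. -/
theorem stmt2 (M : ObliviousFRAN) (m k : Fin 2) (t : ℕ) :
    M.Eh m k t ≤ ∑ j ∈ Finset.range (t + 1), (1 - M.bk k * M.r k) ^ j := by
  have hp : M.bk k * M.r k ≤ 1 := mul_le_one₀ (M.bsum_le_one k) (M.r_nonneg k) (M.r_le_one k)
  exact le_geom_sum_of_le_mul_add_one (sub_nonneg.2 hp) (M.Eh_zero m k).le (M.Eh_succ_le m k) t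
end

section
/- Let b ∈ (0,1], r ∈ (0,1), a := r³b − 4r²b + 2r² + 3rb − 2r, and P(x) := a·x² − a·b·x + (−r²b³ + 2r²b² + rb³ − rb² − 3rb + 3). Then: (1) in the oblivious model with parameters b_1 = b, r_1 = r, b_1^{(1)} = x and b_1^{(2)} = b − x, one has E[h_{11}(2)] = P(x) for every x ∈ [0,b]; (2) a = r(1−r)((3−r)b − 2); (3) P(x) = P(b−x) for all x; (4) if b > 2/(3−r), then P attains its minimum over [0,b] uniquely at x = b/2; if b < 2/(3−r), then the minimum of P over [0,b] is attained exactly at the points x = 0 and x = b; if b = 2/(3−r), then P is constant on [0,b]. -/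
open MeasureTheory ProbabilityTheory Filter

/-!
Unrolling the recursions twice shows that `h₀₀(2)` is a fixed function of seven primitive
variables: the requests of both users and the two commands at slot 0, and the request of user 0
and the two commands at slot 1 (all ages start at 1). By independence their joint law is the
product of the marginals, so `E[h₀₀(2)]` is a finite weighted sum; averaging over slot 1 first
gives an affine expression in `min` of the slot-1 ages, and summing the remaining 36 terms yields
the quadratic `P`. Part (4) is then elementary: `P` is symmetric about `b/2`, and the sign of its
leading coefficient `a = r(1-r)((3-r)b-2)` decides between an interior minimum, minima at both
endpoints, and a constant.
-/

namespace ObliviousFRAN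

def userStep (req : Fin 3) (c₀ c₁ : Bool) (hPrev g₀ g₁ : ℕ) : ℕ :=
  if req = 0 then hPrev + 1
  else if req = 1 then (if c₀ = true then 1 else min hPrev g₀ + 1)
  else (if c₁ = true then 1 else min hPrev g₁ + 1)

def errhStep (n : Fin 2) (c : Bool) (req₀ req₁ : Fin 3) (gPrev : ℕ) : ℕ :=
  if c = true ∧ (req₀ = n.succ ∨ req₁ = n.succ) then 1 else gPrev + 1

variable (M : ObliviousFRAN)

theorem g_succ (n k : Fin 2) (t : ℕ) (ω : M.Ω) :
    M.g n k (t + 1) ω =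
      errhStep n (M.γ n k t ω) (M.R 0 k t ω) (M.R 1 k t ω) (M.g n k t ω) := by
  simp only [g, errhStep, Fin.exists_fin_two]

theorem h_succ (m k : Fin 2) (t : ℕ) (ω : M.Ω) :
    M.h m k (t + 1) ω = userStep (M.R m k t ω) (M.γ 0 k t ω) (M.γ 1 k t ω)
      (M.h m k t ω) (M.g 0 k t ω) (M.g 1 k t ω) := rfl

abbrev TwoSlotOutcome : Type := (Fin 3 × Fin 3 × Bool × Bool) × (Fin 3 × Bool × Bool)

def twoSlotOutcome (ω : M.Ω) : TwoSlotOutcome :=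
  ((M.R 0 0 0 ω, M.R 1 0 0 ω, M.γ 0 0 0 ω, M.γ 1 0 0 ω),
    (M.R 0 0 1 ω, M.γ 0 0 1 ω, M.γ 1 0 1 ω))

def ageAtTwo (s : TwoSlotOutcome) : ℕ :=
  let ((u₀, u₁, c₀, c₁), (req, d₀, d₁)) := s
  userStep req d₀ d₁ (userStep u₀ c₀ c₁ 1 1 1)
    (errhStep 0 c₀ u₀ u₁ 1) (errhStep 1 c₁ u₀ u₁ 1)

theorem h_two_eq (ω : M.Ω) : M.h 0 0 2 ω = ageAtTwo (M.twoSlotOutcome ω) := by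
  rw [h_succ, g_succ, g_succ, h_succ]
  rfl

def requestWeight (x y : ℝ) : Fin 3 → ℝ := ![1 - (x + y), x, y]

def commandWeight (r : ℝ) (c : Bool) : ℝ := if c then r else 1 - r

instance (i : FranIdx) : MeasurableSingletonClass (FranType i) := by
  cases i
  · exact inferInstanceAs (MeasurableSingletonClass (Fin 3))
  · exact inferInstanceAs (MeasurableSingletonClass Bool)

theorem measureReal_requests_and_commands (A B : Finset (Fin 2 × Fin 2 × ℕ))
    (ρ : Fin 2 × Fin 2 × ℕ → Fin 3) (κ : Fin 2 × Fin 2 × ℕ → Bool) :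
    M.μ.real {ω | (∀ p ∈ A, M.R p.1 p.2.1 p.2.2 ω = ρ p) ∧
        ∀ q ∈ B, M.γ q.1 q.2.1 q.2.2 ω = κ q} =
      (∏ p ∈ A, M.μ.real {ω | M.R p.1 p.2.1 p.2.2 ω = ρ p}) *
        ∏ q ∈ B, M.μ.real {ω | M.γ q.1 q.2.1 q.2.2 ω = κ q} := by
  let value : (i : FranIdx) → FranType i := fun i => Sum.rec ρ κ i
  have key := M.indep.measure_inter_preimage_eq_mul (A.disjSum B) (sets := fun i => {value i})
    fun i _ => measurableSet_singleton _
  convert congrArg ENNReal.toReal key using 1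
  · rw [measureReal_def]
    congr 2
    ext ω
    simp only [Set.mem_ofPred_eq, Set.mem_iInter, Set.mem_preimage, Set.mem_singleton_iff,
      Sum.forall, Finset.inl_mem_disjSum, Finset.inr_mem_disjSum, value]
    exact Iff.rfl
  · rw [Finset.prod_disjSum, ENNReal.toReal_mul, ENNReal.toReal_prod, ENNReal.toReal_prod]
    rfl

theorem measureReal_R_eq (m k : Fin 2) (t : ℕ) (u : Fin 3) :
    M.μ.real {ω | M.R m k t ω = u} = requestWeight (M.bsplit k 0) (M.bsplit k 1) u := by
  have hle := M.bsum_le_one k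
  fin_cases u
  · simp [measureReal_def, M.R_law0, requestWeight, hle]
  · simpa [measureReal_def, requestWeight, M.bsplit_nonneg] using
      congrArg ENNReal.toReal (M.R_law m k t 0)
  · simpa [measureReal_def, requestWeight, M.bsplit_nonneg] using
      congrArg ENNReal.toReal (M.R_law m k t 1)

theorem measureReal_γ_eq (n k : Fin 2) (t : ℕ) (c : Bool) :
    M.μ.real {ω | M.γ n k t ω = c} = commandWeight (M.r k) c := by
  have := M.isProb
  have htrue : M.μ.real {ω | M.γ n k t ω = true} = M.r k := by
    simp [measureReal_def, M.γ_law, M.r_nonneg]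
  have hmeas : MeasurableSet {ω | M.γ n k t ω = true} :=
    M.γ_meas n k t (measurableSet_singleton true)
  cases c
  · have hcompl : {ω | M.γ n k t ω = false} = {ω | M.γ n k t ω = true}ᶜ := by ext; simp
    rw [hcompl, probReal_compl_eq_one_sub hmeas, htrue]
    rfl
  · exact htrue

def slotWeight (x y r : ℝ) (u : Fin 3) (c₀ c₁ : Bool) : ℝ :=
  requestWeight x y u * commandWeight r c₀ * commandWeight r c₁

def twoSlotWeight (x y r : ℝ) (s : TwoSlotOutcome) : ℝ :=
  let ((u₀, u₁, c₀, c₁), (req, d₀, d₁)) := s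
  requestWeight x y u₁ * slotWeight x y r u₀ c₀ c₁ * slotWeight x y r req d₀ d₁

theorem measurable_twoSlotOutcome : Measurable M.twoSlotOutcome :=
  ((M.R_meas 0 0 0).prodMk <| (M.R_meas 1 0 0).prodMk <|
      (M.γ_meas 0 0 0).prodMk (M.γ_meas 1 0 0)).prodMk <|
    (M.R_meas 0 0 1).prodMk <| (M.γ_meas 0 0 1).prodMk (M.γ_meas 1 0 1)

theorem measureReal_twoSlotOutcome_eq (s : TwoSlotOutcome) :
    M.μ.real (M.twoSlotOutcome ⁻¹' {s}) =
      twoSlotWeight (M.bsplit 0 0) (M.bsplit 0 1) (M.r 0) s := by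
  obtain ⟨⟨u₀, u₁, c₀, c₁⟩, req, d₀, d₁⟩ := s
  let ρ : Fin 2 × Fin 2 × ℕ → Fin 3 := fun p =>
    if p = (0, 0, 0) then u₀ else if p = (1, 0, 0) then u₁ else req
  let κ : Fin 2 × Fin 2 × ℕ → Bool := fun q =>
    if q = (0, 0, 0) then c₀ else if q = (1, 0, 0) then c₁
    else if q = (0, 0, 1) then d₀ else d₁
  have hevent : M.twoSlotOutcome ⁻¹' {((u₀, u₁, c₀, c₁), (req, d₀, d₁))} =
      {ω | (∀ p ∈ ({(0, 0, 0), (1, 0, 0), (0, 0, 1)} : Finset _),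
          M.R p.1 p.2.1 p.2.2 ω = ρ p) ∧
        ∀ q ∈ ({(0, 0, 0), (1, 0, 0), (0, 0, 1), (1, 0, 1)} : Finset _),
          M.γ q.1 q.2.1 q.2.2 ω = κ q} := by
    ext ω
    simp only [Set.mem_preimage, twoSlotOutcome, Set.mem_singleton_iff, Prod.mk.injEq,
      Finset.mem_insert, Finset.mem_singleton, forall_eq_or_imp, forall_eq, Set.mem_ofPred_eq,
      ρ, κ]
    tauto
  rw [hevent, measureReal_requests_and_commands]
  simp [measureReal_R_eq, measureReal_γ_eq, twoSlotWeight, slotWeight, ρ, κ,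
    mul_left_comm, mul_assoc]

theorem Eh_two_eq_sum :
    M.Eh 0 0 2 = ∑ s, twoSlotWeight (M.bsplit 0 0) (M.bsplit 0 1) (M.r 0) s * ageAtTwo s := by
  have := M.isProb
  have hmeas := M.measurable_twoSlotOutcome
  calc M.Eh 0 0 2 = ∫ ω, (ageAtTwo (M.twoSlotOutcome ω) : ℝ) ∂M.μ := by
        simp only [Eh, h_two_eq]
    _ = ∫ s, (ageAtTwo s : ℝ) ∂(M.μ.map M.twoSlotOutcome) :=
        (integral_map hmeas.aemeasurable
          (measurable_of_countable fun s => (ageAtTwo s : ℝ)).aestronglyMeasurable).symm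
    _ = _ := by
        rw [integral_fintype Integrable.of_finite]
        refine Finset.sum_congr rfl fun s _ => ?_
        rw [map_measureReal_apply hmeas (measurableSet_singleton s), smul_eq_mul,
          measureReal_twoSlotOutcome_eq]

theorem sum_slotWeight_mul_userStep (x y r : ℝ) (H G₀ G₁ : ℕ) :
    ∑ q : Fin 3 × Bool × Bool,
        slotWeight x y r q.1 q.2.1 q.2.2 * userStep q.1 q.2.1 q.2.2 H G₀ G₁ =
      (1 - (x + y)) * (H + 1) + x * (r + (1 - r) * ((min H G₀ : ℕ) + 1)) +
        y * (r + (1 - r) * ((min H G₁ : ℕ) + 1)) := by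
  simp only [Fintype.sum_prod_type, Fin.sum_univ_three, Fintype.sum_bool, slotWeight, userStep,
    requestWeight, commandWeight]
  norm_num [Fin.ext_iff, Matrix.cons_val_two]
  ring

theorem sum_twoSlotWeight_mul_ageAtTwo (b r x : ℝ) :
    ∑ s, twoSlotWeight x (b - x) r s * ageAtTwo s =
      (r ^ 3 * b - 4 * r ^ 2 * b + 2 * r ^ 2 + 3 * r * b - 2 * r) * x ^ 2 -
        (r ^ 3 * b - 4 * r ^ 2 * b + 2 * r ^ 2 + 3 * r * b - 2 * r) * b * x +
        (-(r ^ 2 * b ^ 3) + 2 * r ^ 2 * b ^ 2 + r * b ^ 3 - r * b ^ 2 - 3 * r * b + 3) := by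
  rw [Fintype.sum_prod_type]
  simp only [twoSlotWeight, ageAtTwo, mul_assoc, ← Finset.mul_sum, sum_slotWeight_mul_userStep]
  simp only [Fintype.sum_prod_type, Fin.sum_univ_three, Fintype.sum_bool, slotWeight, userStep,
    errhStep, requestWeight, commandWeight]
  norm_num [Fin.ext_iff, Matrix.cons_val_two]
  ring

end ObliviousFRAN

section Quadratic

variable {a b c x : ℝ}

theorem quadratic_center_lt_of_pos (ha : 0 < a) (hx : x ≠ b / 2) :
    a * (b / 2) ^ 2 - a * b * (b / 2) + c < a * x ^ 2 - a * b * x + c := by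
  have hsq : 0 < (x - b / 2) ^ 2 := pow_two_pos_of_ne_zero (sub_ne_zero.mpr hx)
  nlinarith [mul_pos ha hsq]

theorem const_lt_quadratic_of_neg (ha : a < 0) (hx : x ∈ Set.Ioo 0 b) :
    c < a * x ^ 2 - a * b * x + c := by
  obtain ⟨hx0, hxb⟩ := hx
  nlinarith [mul_pos (mul_pos (neg_pos.mpr ha) hx0) (sub_pos.mpr hxb)]

end Quadratic

theorem stmt10_general (b r : ℝ) (hr : r ∈ Set.Ioo (0 : ℝ) 1)
    (a : ℝ) (ha : a = r ^ 3 * b - 4 * r ^ 2 * b + 2 * r ^ 2 + 3 * r * b - 2 * r)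
    (P : ℝ → ℝ)
    (hP : P = fun x => a * x ^ 2 - a * b * x +
      (-(r ^ 2 * b ^ 3) + 2 * r ^ 2 * b ^ 2 + r * b ^ 3 - r * b ^ 2 - 3 * r * b + 3)) :
    (∀ x ∈ Set.Icc (0 : ℝ) b, ∀ M : ObliviousFRAN,
        M.bsplit 0 0 = x → M.bsplit 0 1 = b - x → M.r 0 = r →
        M.Eh 0 0 2 = P x) ∧
    a = r * (1 - r) * ((3 - r) * b - 2) ∧
    (∀ x : ℝ, P x = P (b - x)) ∧
    ((b > 2 / (3 - r) → ∀ x ∈ Set.Icc (0 : ℝ) b, x ≠ b / 2 → P (b / 2) < P x) ∧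
     (b < 2 / (3 - r) →
        P 0 = P b ∧ ∀ x ∈ Set.Icc (0 : ℝ) b, x ≠ 0 → x ≠ b → P 0 < P x) ∧
     (b = 2 / (3 - r) → ∀ x ∈ Set.Icc (0 : ℝ) b, P x = P 0)) := by
  obtain ⟨hr0, hr1⟩ := hr
  have h3r : 0 < 3 - r := by linarith
  have hfactor : a = r * (1 - r) * ((3 - r) * b - 2) := by rw [ha]; ring
  have hr_pos : 0 < r * (1 - r) := mul_pos hr0 (by linarith)
  subst hP
  refine ⟨fun x _ M hx hy hrate => ?_, hfactor, fun x => by ring, fun hbig x _ hx => ?_,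
    fun hsmall => ⟨by ring, fun x hx hx0 hxb => ?_⟩, fun hcrit x _ => ?_⟩
  · rw [M.Eh_two_eq_sum, hx, hy, hrate, ObliviousFRAN.sum_twoSlotWeight_mul_ageAtTwo, ha]
  · have ha_pos : 0 < a := by
      rw [hfactor]
      exact mul_pos hr_pos (by rw [gt_iff_lt, div_lt_iff₀ h3r] at hbig; linarith)
    exact quadratic_center_lt_of_pos ha_pos hx
  · have ha_neg : a < 0 := by
      rw [hfactor]
      exact mul_neg_of_pos_of_neg hr_pos (by rw [lt_div_iff₀ h3r] at hsmall; linarith)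
    refine lt_of_eq_of_lt ?_ (const_lt_quadratic_of_neg ha_neg
      ⟨hx.1.lt_of_ne' hx0, hx.2.lt_of_ne hxb⟩)
    ring
  · have ha_zero : a = 0 := by rw [hfactor, hcrit, mul_div_cancel₀ _ h3r.ne']; ring
    simp [ha_zero]

/-- the explicit quadratic `P(x) = E[h_{11}(2)]` as a function of
the split `x = b_1^{(1)}`, its symmetry, and the location of its minima on
`[0, b]` according to the sign of `b - 2/(3-r)`. -/
theorem stmt10 (b r : ℝ) (hb : b ∈ Set.Ioc (0 : ℝ) 1) (hr : r ∈ Set.Ioo (0 : ℝ) 1)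
    (a : ℝ) (ha : a = r ^ 3 * b - 4 * r ^ 2 * b + 2 * r ^ 2 + 3 * r * b - 2 * r)
    (P : ℝ → ℝ)
    (hP : P = fun x => a * x ^ 2 - a * b * x +
      (-(r ^ 2 * b ^ 3) + 2 * r ^ 2 * b ^ 2 + r * b ^ 3 - r * b ^ 2 - 3 * r * b + 3)) :
    (∀ x ∈ Set.Icc (0 : ℝ) b, ∀ M : ObliviousFRAN,
        M.bsplit 0 0 = x → M.bsplit 0 1 = b - x → M.r 0 = r →
        M.Eh 0 0 2 = P x) ∧
    a = r * (1 - r) * ((3 - r) * b - 2) ∧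
    (∀ x : ℝ, P x = P (b - x)) ∧
    ((b > 2 / (3 - r) → ∀ x ∈ Set.Icc (0 : ℝ) b, x ≠ b / 2 → P (b / 2) < P x) ∧
     (b < 2 / (3 - r) →
        P 0 = P b ∧ ∀ x ∈ Set.Icc (0 : ℝ) b, x ≠ 0 → x ≠ b → P 0 < P x) ∧
     (b = 2 / (3 - r) → ∀ x ∈ Set.Icc (0 : ℝ) b, P x = P 0)) :=
  stmt10_general b r hr a ha P hP
end

section
/- Let b ∈ (0,2) and r ∈ (0,2). The function F(x,s) := 1/x + 1/(b−x) + 1/(s·x·(2−x)) + 1/((r−s)·(b−x)·(2−(b−x))) is convex on the open rectangle (0,b) × (0,r), and (x,s) = (b/2, r/2) is its unique global minimum point on this domain. -/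
/-!
Since `1 / (x (2 - x)) = (1 / x + 1 / (2 - x)) / 2`, the function is a nonnegative combination of
terms `1 / (ℓ₁ ℓ₂)` with `ℓ₁, ℓ₂` affine and positive on the rectangle, and each such term is
convex by the weighted AM-GM inequality. The same splitting groups the terms into three pairs
`1 / (s u) + 1 / (t v)` whose sums `s + t`, `u + v` do not depend on the point; each pair is at
least `8 / ((s + t) (u + v))`, with equality at `(b / 2, r / 2)` and strict inequality when
`s ≠ t`, which gives the unique minimum.
-/

open Set

theorem ConcaveOn.convexOn_inv_mul {E : Type*} [AddCommGroup E] [Module ℝ E] {S : Set E}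
    {f g : E → ℝ} (hf : ConcaveOn ℝ S f) (hg : ConcaveOn ℝ S g)
    (hf₀ : ∀ x ∈ S, 0 < f x) (hg₀ : ∀ x ∈ S, 0 < g x) :
    ConvexOn ℝ S fun x => (f x * g x)⁻¹ := by
  refine ⟨hf.1, fun x hx y hy a b ha hb hab => ?_⟩
  have hfx := hf₀ x hx
  have hfy := hf₀ y hy
  have hgx := hg₀ x hx
  have hgy := hg₀ y hy
  have geom_le_arith (p q : ℝ) (hp : 0 < p) (hq : 0 < q) :=
    Real.geom_mean_le_arith_mean2_weighted ha hb hp.le hq.le hab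
  have key : (f x * g x) ^ a * (f y * g y) ^ b ≤ f (a • x + b • y) * g (a • x + b • y) := by
    calc (f x * g x) ^ a * (f y * g y) ^ b
        = (f x ^ a * f y ^ b) * (g x ^ a * g y ^ b) := by
          rw [Real.mul_rpow hfx.le hgx.le, Real.mul_rpow hfy.le hgy.le]; ring
      _ ≤ (a * f x + b * f y) * (a * g x + b * g y) :=
          mul_le_mul (geom_le_arith _ _ hfx hfy) (geom_le_arith _ _ hgx hgy) (by positivity)
            (by positivity)
      _ ≤ f (a • x + b • y) * g (a • x + b • y) :=
          mul_le_mul (hf.2 hx hy ha hb hab) (hg.2 hx hy ha hb hab) (by positivity)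
            (hf₀ _ (hf.1 hx hy ha hb hab)).le
  calc (f (a • x + b • y) * g (a • x + b • y))⁻¹
      ≤ ((f x * g x) ^ a * (f y * g y) ^ b)⁻¹ := inv_anti₀ (by positivity) key
    _ = (f x * g x)⁻¹ ^ a * (f y * g y)⁻¹ ^ b := by
        rw [mul_inv, Real.inv_rpow (by positivity), Real.inv_rpow (by positivity)]
    _ ≤ a • (f x * g x)⁻¹ + b • (f y * g y)⁻¹ := geom_le_arith _ _ (by positivity) (by positivity)

theorem concaveOn_affine_prod {S : Set (ℝ × ℝ)} (hS : Convex ℝ S) (α β γ : ℝ) :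
    ConcaveOn ℝ S fun p => α + β * p.1 + γ * p.2 :=
  ⟨hS, fun p _ q _ a b _ _ hab => le_of_eq <| by
    simp only [Prod.fst_add, Prod.snd_add, Prod.smul_fst, Prod.smul_snd, smul_eq_mul]
    linear_combination α * hab⟩

theorem eight_div_le_inv_mul_add_inv_mul {s t u v : ℝ} (hs : 0 < s) (ht : 0 < t) (hu : 0 < u)
    (hv : 0 < v) : 8 / ((s + t) * (u + v)) ≤ (s * u)⁻¹ + (t * v)⁻¹ := by
  rw [← one_div, ← one_div, div_add_div _ _ (by positivity) (by positivity),
    div_le_div_iff₀ (by positivity) (by positivity)]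
  nlinarith [sq_nonneg (s * u - t * v), mul_nonneg (mul_nonneg hu.le hv.le) (sq_nonneg (s - t)),
    mul_nonneg (mul_nonneg hs.le ht.le) (sq_nonneg (u - v))]

theorem eight_div_lt_inv_mul_add_inv_mul {s t u v : ℝ} (hs : 0 < s) (ht : 0 < t) (hu : 0 < u)
    (hv : 0 < v) (hst : s ≠ t) : 8 / ((s + t) * (u + v)) < (s * u)⁻¹ + (t * v)⁻¹ := by
  rw [← one_div, ← one_div, div_add_div _ _ (by positivity) (by positivity),
    div_lt_div_iff₀ (by positivity) (by positivity)]
  have : 0 < u * v * (s - t) ^ 2 := by have := sub_ne_zero.2 hst; positivity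
  nlinarith [sq_nonneg (s * u - t * v), mul_nonneg (mul_nonneg hs.le ht.le) (sq_nonneg (u - v))]

noncomputable def objective (b r : ℝ) (p : ℝ × ℝ) : ℝ :=
  1 / p.1 + 1 / (b - p.1) + 1 / (p.2 * p.1 * (2 - p.1))
    + 1 / ((r - p.2) * (b - p.1) * (2 - (b - p.1)))

variable {b r : ℝ}

theorem objective_eq {x s : ℝ} (hx : x ∈ Ioo 0 b) (hs : s ∈ Ioo 0 r) (hb : b < 2) :
    objective b r (x, s) = (x * 1)⁻¹ + ((b - x) * 1)⁻¹
      + 2⁻¹ * ((s * x)⁻¹ + ((r - s) * (b - x))⁻¹)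
      + 2⁻¹ * ((s * (2 - x))⁻¹ + ((r - s) * (2 - (b - x)))⁻¹) := by
  obtain ⟨hx₀, hxb⟩ := hx
  obtain ⟨hs₀, hsr⟩ := hs
  have : b - x ≠ 0 := by linarith
  have : 2 - x ≠ 0 := by linarith
  have : r - s ≠ 0 := by linarith
  have : 2 - (b - x) ≠ 0 := by linarith
  simp only [objective]
  field_simp
  ring

theorem convexOn_objective (hb : b < 2) : ConvexOn ℝ (Ioo 0 b ×ˢ Ioo 0 r) (objective b r) := by
  set S := Ioo 0 b ×ˢ Ioo 0 r
  have hS : Convex ℝ S := (convex_Ioo 0 b).prod (convex_Ioo 0 r)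
  have term (α β γ α' β' γ' : ℝ) (h : ∀ p ∈ S, 0 < α + β * p.1 + γ * p.2)
      (h' : ∀ p ∈ S, 0 < α' + β' * p.1 + γ' * p.2) :
      ConvexOn ℝ S fun p => ((α + β * p.1 + γ * p.2) * (α' + β' * p.1 + γ' * p.2))⁻¹ :=
    (concaveOn_affine_prod hS α β γ).convexOn_inv_mul (concaveOn_affine_prod hS α' β' γ') h h'
  have half : (0 : ℝ) ≤ 2⁻¹ := by norm_num
  refine (((term 0 1 0 1 0 0 ?_ ?_).add (term b (-1) 0 1 0 0 ?_ ?_)).add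
    (((term 0 0 1 0 1 0 ?_ ?_).add (term r 0 (-1) b (-1) 0 ?_ ?_)).smul half)
    |>.add (((term 0 0 1 2 (-1) 0 ?_ ?_).add (term r 0 (-1) (2 - b) 1 0 ?_ ?_)).smul half))
    |>.congr ?eq
  case eq =>
    rintro ⟨x, s⟩ ⟨hx, hs⟩
    rw [objective_eq hx hs hb]
    simp only [Pi.add_apply, smul_eq_mul]
    ring_nf
  all_goals rintro ⟨x, s⟩ ⟨⟨hx₀, hxb⟩, ⟨hs₀, hsr⟩⟩; dsimp only; linarith

theorem objective_center (hb₀ : 0 < b) (hb : b < 2) (hr : 0 < r) :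
    objective b r (b / 2, r / 2)
      = 8 / (b * 2) + 2⁻¹ * (8 / (r * b)) + 2⁻¹ * (8 / (r * (4 - b))) := by
  have : 4 - b ≠ 0 := by linarith
  simp only [objective]
  rw [show b - b / 2 = b / 2 by ring, show r - r / 2 = r / 2 by ring,
    show 2 - b / 2 = (4 - b) / 2 by ring]
  field_simp
  ring

theorem objective_lt_of_ne (hb : b < 2) {x s : ℝ} (hx : x ∈ Ioo 0 b) (hs : s ∈ Ioo 0 r)
    (hne : (x, s) ≠ (b / 2, r / 2)) :
    objective b r (b / 2, r / 2) < objective b r (x, s) := by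
  rw [objective_eq hx hs hb, objective_center (hx.1.trans hx.2) hb (hs.1.trans hs.2)]
  obtain ⟨hx₀, hxb⟩ := hx
  obtain ⟨hs₀, hsr⟩ := hs
  have hbx : 0 < b - x := by linarith
  have hrs : 0 < r - s := by linarith
  have h2x : 0 < 2 - x := by linarith
  have h2bx : 0 < 2 - (b - x) := by linarith
  have hx_le : 8 / (b * 2) ≤ (x * 1)⁻¹ + ((b - x) * 1)⁻¹ := by
    convert eight_div_le_inv_mul_add_inv_mul hx₀ hbx one_pos one_pos using 2; ring
  have hsx_le : 8 / (r * b) ≤ (s * x)⁻¹ + ((r - s) * (b - x))⁻¹ := by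
    convert eight_div_le_inv_mul_add_inv_mul hs₀ hrs hx₀ hbx using 2; ring
  have hs2x_le : 8 / (r * (4 - b)) ≤ (s * (2 - x))⁻¹ + ((r - s) * (2 - (b - x)))⁻¹ := by
    convert eight_div_le_inv_mul_add_inv_mul hs₀ hrs h2x h2bx using 2; ring
  obtain hxne | hsne : x ≠ b / 2 ∨ s ≠ r / 2 := by
    contrapose! hne
    rw [hne.1, hne.2]
  · have hx_lt : 8 / (b * 2) < (x * 1)⁻¹ + ((b - x) * 1)⁻¹ := by
      convert eight_div_lt_inv_mul_add_inv_mul hx₀ hbx one_pos one_pos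
        (by contrapose! hxne; linarith) using 2; ring
    linarith
  · have hsx_lt : 8 / (r * b) < (s * x)⁻¹ + ((r - s) * (b - x))⁻¹ := by
      convert eight_div_lt_inv_mul_add_inv_mul hs₀ hrs hx₀ hbx
        (by contrapose! hsne; linarith) using 2; ring
    linarith

/-- convexity of
`F(x,s) = 1/x + 1/(b-x) + 1/(s x (2-x)) + 1/((r-s)(b-x)(2-(b-x)))`
on `(0,b) × (0,r)` and uniqueness of its global minimum at `(b/2, r/2)`. -/
theorem stmt12 (b r : ℝ) (hb : b ∈ Set.Ioo (0 : ℝ) 2) (hr : r ∈ Set.Ioo (0 : ℝ) 2)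
    (F : ℝ × ℝ → ℝ)
    (hF : F = fun p => 1 / p.1 + 1 / (b - p.1) + 1 / (p.2 * p.1 * (2 - p.1))
      + 1 / ((r - p.2) * (b - p.1) * (2 - (b - p.1)))) :
    ConvexOn ℝ (Set.Ioo (0 : ℝ) b ×ˢ Set.Ioo (0 : ℝ) r) F ∧
    (b / 2, r / 2) ∈ Set.Ioo (0 : ℝ) b ×ˢ Set.Ioo (0 : ℝ) r ∧
    ∀ p ∈ Set.Ioo (0 : ℝ) b ×ˢ Set.Ioo (0 : ℝ) r,
      p ≠ (b / 2, r / 2) → F (b / 2, r / 2) < F p := by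
  obtain ⟨hb₀, hb₂⟩ := hb
  obtain ⟨hr₀, -⟩ := hr
  subst hF
  refine ⟨convexOn_objective hb₂,
    ⟨⟨half_pos hb₀, half_lt_self hb₀⟩, ⟨half_pos hr₀, half_lt_self hr₀⟩⟩, ?_⟩
  rintro ⟨x, s⟩ ⟨hx, hs⟩ hne
  exact objective_lt_of_ne hb₂ hx hs hne
end

section
/- The function (x,y) ↦ 1/(x·y·(2−y)) is convex on the set {(x,y) ∈ ℝ² : x > 0 and 0 < y < 2}. -/
/-! The function is the reciprocal of a product of three affine functions that are positive on the
domain, so its logarithm `-log x - log y - log (2 - y)` is convex; the exponential of a convex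
function is convex. -/

open Set

theorem ConvexOn.sum {𝕜 E β ι : Type*} [Semiring 𝕜] [PartialOrder 𝕜] [AddCommMonoid E]
    [AddCommMonoid β] [PartialOrder β] [IsOrderedAddMonoid β] [SMul 𝕜 E] [Module 𝕜 β]
    {s : Set E} (hs : Convex 𝕜 s) {t : Finset ι} {f : ι → E → β}
    (hf : ∀ i ∈ t, ConvexOn 𝕜 s (f i)) : ConvexOn 𝕜 s (fun x => ∑ i ∈ t, f i x) := by
  classical
  induction t using Finset.induction_on with
  | empty => simpa using convexOn_const (0 : β) hs
  | insert i t hi ih =>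
    simp_rw [Finset.sum_insert hi]
    exact (hf i (t.mem_insert_self i)).add (ih fun j hj => hf j (Finset.mem_insert_of_mem hj))

theorem ConvexOn.exp {E : Type*} [AddCommMonoid E] [Module ℝ E] {s : Set E} {g : E → ℝ}
    (hg : ConvexOn ℝ s g) : ConvexOn ℝ s (fun x => Real.exp (g x)) := by
  refine ⟨hg.1, fun x hx y hy a b ha hb hab => ?_⟩
  calc Real.exp (g (a • x + b • y)) ≤ Real.exp (a • g x + b • g y) :=
        Real.exp_le_exp.2 (hg.2 hx hy ha hb hab)
    _ ≤ a • Real.exp (g x) + b • Real.exp (g y) :=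
        convexOn_exp.2 (mem_univ _) (mem_univ _) ha hb hab

theorem convexOn_neg_log_comp_affineMap {E : Type*} [AddCommGroup E] [Module ℝ E]
    (f : E →ᵃ[ℝ] ℝ) : ConvexOn ℝ {x | 0 < f x} (fun x => -Real.log (f x)) :=
  strictConcaveOn_log_Ioi.concaveOn.neg.comp_affineMap f

theorem convexOn_inv_prod_affineMap {E ι : Type*} [AddCommGroup E] [Module ℝ E]
    (t : Finset ι) (f : ι → E →ᵃ[ℝ] ℝ) :
    ConvexOn ℝ {x | ∀ i ∈ t, 0 < f i x} (fun x => (∏ i ∈ t, f i x)⁻¹) := by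
  have hs : Convex ℝ {x | ∀ i ∈ t, 0 < f i x} := by
    simpa only [ofPred_forall] using
      convex_iInter₂ fun i _ => (convexOn_neg_log_comp_affineMap (f i)).1
  have hlog : ConvexOn ℝ {x | ∀ i ∈ t, 0 < f i x} (fun x => ∑ i ∈ t, -Real.log (f i x)) :=
    ConvexOn.sum hs fun i hi =>
      (convexOn_neg_log_comp_affineMap (f i)).subset (fun x hx => hx i hi) hs
  refine hlog.exp.congr fun x hx => ?_
  simp only [Real.exp_sum, Real.exp_neg, ← Finset.prod_inv_distrib]
  exact Finset.prod_congr rfl fun i hi => by rw [Real.exp_log (hx i hi)]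

/-- `(x,y) ↦ 1/(x y (2-y))` is convex on
`{(x,y) : x > 0, 0 < y < 2}`. -/
theorem stmt13 :
    ConvexOn ℝ {p : ℝ × ℝ | 0 < p.1 ∧ 0 < p.2 ∧ p.2 < 2}
      (fun p : ℝ × ℝ => 1 / (p.1 * p.2 * (2 - p.2))) := by
  let f : Fin 3 → (ℝ × ℝ) →ᵃ[ℝ] ℝ := ![(LinearMap.fst ℝ ℝ ℝ).toAffineMap,
    (LinearMap.snd ℝ ℝ ℝ).toAffineMap,
    AffineMap.const ℝ (ℝ × ℝ) 2 - (LinearMap.snd ℝ ℝ ℝ).toAffineMap]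
  have hdom :
      {p : ℝ × ℝ | 0 < p.1 ∧ 0 < p.2 ∧ p.2 < 2} = {p | ∀ i ∈ Finset.univ, 0 < f i p} := by
    ext p
    simp [Fin.forall_fin_succ, f]
  rw [hdom]
  refine (convexOn_inv_prod_affineMap Finset.univ f).congr fun p _ => ?_
  simp [Fin.prod_univ_three, f]
end
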